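/- For every natural number n ≥ 1, the friendship graph F_n is Perrin cordial if and only if n ≢ 2 (mod 4). -/

import Mathlib

/-- The reindexed Perrin sequence: `P 0 = 0`, `P 1 = 3`, `P 2 = 0`, `P 3 = 2`,
and `P n = P (n-2) + P (n-3)` thereafter
(so `P 4 = 3`, `P 5 = 2`, `P 6 = 5`, ...). -/
def perrin : ℕ → ℕ
  | 0 => 0
  | 1 => 3
  | 2 => 0
  | 3 => 2
  | n + 4 => perrin (n + 2) + perrin (n + 1)

/-- The induced edge label: `f` assigns to each vertex the index of a Perrin number,
and an edge `uv` gets the label `(P (f u) + P (f v)) mod 2`. -/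
def perrinEdgeLabel {V : Type*} (f : V → ℕ) : Sym2 V → ℕ :=
  Sym2.lift ⟨fun u v => (perrin (f u) + perrin (f v)) % 2, fun u v => by simp [Nat.add_comm]⟩

/-- `eCount G f i` is the number of edges of `G` whose induced label under `f` is `i`. -/
noncomputable def eCount {V : Type*} (G : SimpleGraph V) (f : V → ℕ) (i : ℕ) : ℕ :=
  {e | e ∈ G.edgeSet ∧ perrinEdgeLabel f e = i}.ncard

/-- A finite simple graph `G` on `N` vertices is Perrin cordial if there is an injective
labeling of its vertices by indices in `{0, 1, ..., N}` such that the numbers of edges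
with induced label `0` and `1` differ by at most `1`. -/
def IsPerrinCordial {V : Type*} [Fintype V] (G : SimpleGraph V) : Prop :=
  ∃ f : V → Fin (Fintype.card V + 1), Function.Injective f ∧
    |(eCount G (fun v => (f v : ℕ)) 0 : ℤ) - (eCount G (fun v => (f v : ℕ)) 1 : ℤ)| ≤ 1

/-- The friendship graph `F n`: the apex `none` is adjacent to each of the `2n` vertices
`some i`, and `some i` is adjacent to `some j` (for `i ≠ j`) exactly when `{i, j}` is one
of the pairs `{0, 1}, {2, 3}, ...` (i.e. `i / 2 = j / 2`), giving `n` triangles sharing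
the apex. -/
def friendshipGraph (n : ℕ) : SimpleGraph (Option (Fin (2 * n))) :=
  SimpleGraph.fromRel (fun a b =>
    a = none ∨ ∃ i j : Fin (2 * n), a = some i ∧ b = some j ∧ i.val / 2 = j.val / 2)

/-!
Colour each vertex by the parity of the Perrin number its label indexes. An edge gets label `1`
exactly when its endpoints have different parities, so every triangle of `F n` carries zero or
two edges labelled `1`. Hence `e(1)` is even while `e(0) + e(1) = 3n`; for `n ≡ 2 (mod 4)`
balance would force `e(0) = e(1) = 3n/2`, which is odd.

Conversely, the Perrin numbers mod 2 are periodic with period 7 from index 1 (pattern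
`1001011`), so about `4/7` of the indices `0, …, 2n + 1` are odd. Let `k` be the integer with
`|3n - 4k| ≤ 1`. Give the apex an odd index, make `n - k` triangles entirely odd and the other
`k` triangles not monochromatic, so that `e(1) = 2k`. Such a colouring has between
`2(n - k) + 1` and `2(n - k) + k + 1` odd vertices, depending on how many mixed triangles have
both leaves even, and the number of odd indices available falls in that range.
-/

open Finset Function

theorem perrin_add_eight_mod_two : ∀ m, perrin (m + 8) % 2 = perrin (m + 1) % 2
  | 0 | 1 | 2 => rfl
  | m + 3 => by
    have h₁ : perrin (m + 9) % 2 = perrin (m + 2) % 2 := perrin_add_eight_mod_two (m + 1)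
    have h₀ : perrin (m + 8) % 2 = perrin (m + 1) % 2 := perrin_add_eight_mod_two m
    rw [show perrin (m + 3 + 8) = perrin (m + 9) + perrin (m + 8) from rfl,
      show perrin (m + 3 + 1) = perrin (m + 2) + perrin (m + 1) from rfl]
    omega

def oddPerrinCount (M : ℕ) : ℕ := #{m ∈ range M | perrin m % 2 = 1}

theorem oddPerrinCount_succ (M : ℕ) :
    oddPerrinCount (M + 1) = oddPerrinCount M + if perrin M % 2 = 1 then 1 else 0 := by
  simp only [oddPerrinCount, card_filter, sum_range_succ]

theorem oddPerrinCount_add_seven (m : ℕ) :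
    oddPerrinCount (m + 8) = oddPerrinCount (m + 1) + 4 := by
  induction m with
  | zero => decide
  | succ m ih =>
    rw [oddPerrinCount_succ, ih, oddPerrinCount_succ (m + 1), perrin_add_eight_mod_two]
    omega

theorem oddPerrinCount_add_mul_seven (r q : ℕ) :
    oddPerrinCount (r + 1 + 7 * q) = oddPerrinCount (r + 1) + 4 * q := by
  induction q with
  | zero => rfl
  | succ q ih =>
    rw [show r + 1 + 7 * (q + 1) = r + 7 * q + 8 by ring, oddPerrinCount_add_seven,
      show r + 7 * q + 1 = r + 1 + 7 * q by ring, ih]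
    ring

theorem oddPerrinCount_bounds {n k : ℕ} (hk : 4 * k ≤ 3 * n + 1 ∧ 3 * n ≤ 4 * k + 1) :
    2 * (n - k) + 1 ≤ oddPerrinCount (2 * n + 2) ∧
      oddPerrinCount (2 * n + 2) ≤ 2 * (n - k) + k + 1 := by
  have hblock := oddPerrinCount_add_mul_seven ((2 * n + 1) % 7) ((2 * n + 1) / 7)
  rw [show (2 * n + 1) % 7 + 1 + 7 * ((2 * n + 1) / 7) = 2 * n + 2 by omega] at hblock
  have hvalues : oddPerrinCount 1 = 0 ∧ oddPerrinCount 2 = 1 ∧ oddPerrinCount 3 = 1 ∧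
      oddPerrinCount 4 = 1 ∧ oddPerrinCount 5 = 2 ∧ oddPerrinCount 6 = 2 ∧
      oddPerrinCount 7 = 3 := by decide
  have hr : (2 * n + 1) % 7 < 7 := Nat.mod_lt _ (by norm_num)
  interval_cases hr' : (2 * n + 1) % 7 <;> simp only [Nat.reduceAdd] at hblock <;> omega

theorem card_fin_perrin_odd (M : ℕ) :
    Fintype.card {a : Fin M // perrin a % 2 = 1} = oddPerrinCount M := by
  rw [Fintype.card_subtype, card_filter,
    Fin.sum_univ_eq_sum_range (fun m => if perrin m % 2 = 1 then 1 else 0), ← card_filter]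
  rfl

theorem exists_injective_iff_of_card_le {V α : Type*} [Fintype V] [Fintype α] {P : V → Prop}
    {Q : α → Prop} [DecidablePred P] [DecidablePred Q]
    (h₁ : Fintype.card {v // P v} ≤ Fintype.card {a // Q a})
    (h₂ : Fintype.card {v // ¬ P v} ≤ Fintype.card {a // ¬ Q a}) :
    ∃ f : V → α, Injective f ∧ ∀ v, Q (f v) ↔ P v := by
  obtain ⟨e₁⟩ := Function.Embedding.nonempty_of_card_le h₁
  obtain ⟨e₂⟩ := Function.Embedding.nonempty_of_card_le h₂
  refine ⟨Equiv.sumCompl Q ∘ Sum.map e₁ e₂ ∘ (Equiv.sumCompl P).symm,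
    (Equiv.sumCompl Q).injective.comp <|
      (Sum.map_injective.2 ⟨e₁.injective, e₂.injective⟩).comp
        (Equiv.sumCompl P).symm.injective,
    fun v => ?_⟩
  by_cases hv : P v
  · simp [Equiv.sumCompl_symm_apply_of_pos hv, hv, (e₁ ⟨v, hv⟩).2]
  · simp [Equiv.sumCompl_symm_apply_of_neg hv, hv, (e₂ ⟨v, hv⟩).2]

theorem perrinEdgeLabel_mk {V : Type*} (f : V → ℕ) (u v : V) :
    perrinEdgeLabel f s(u, v) = (perrin (f u) + perrin (f v)) % 2 := rfl

theorem perrinEdgeLabel_lt_two {V : Type*} (f : V → ℕ) (e : Sym2 V) :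
    perrinEdgeLabel f e < 2 := by
  induction e using Sym2.ind with
  | _ u v => exact Nat.mod_lt _ two_pos

theorem eCount_zero_add_eCount_one {V : Type*} [Finite V] (G : SimpleGraph V) (f : V → ℕ) :
    eCount G f 0 + eCount G f 1 = G.edgeSet.ncard := by
  rw [eCount, eCount, ← Set.ncard_union_eq]
  · congr 1
    ext e
    rcases (by have := perrinEdgeLabel_lt_two f e; omega :
      perrinEdgeLabel f e = 0 ∨ perrinEdgeLabel f e = 1) with h | h <;> simp [h]
  · exact Set.disjoint_left.2 fun e h₀ h₁ => by simp_all

theorem eCount_eq_card_filter {V ι : Type*} [Fintype ι] (G : SimpleGraph V) {e : ι → Sym2 V}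
    (he : Injective e) (hG : G.edgeSet = Set.range e) (f : V → ℕ) (i : ℕ) :
    eCount G f i = #{x | perrinEdgeLabel f (e x) = i} := by
  have : {e' | e' ∈ G.edgeSet ∧ perrinEdgeLabel f e' = i} =
      e '' {x | perrinEdgeLabel f (e x) = i} := by
    ext; simp only [hG]; aesop
  rw [eCount, this, Set.ncard_image_of_injective _ he, ← Set.ncard_coe_finset]
  simp

theorem card_odd_pairwise_sums (x y z : ℕ) :
    (if (x + y) % 2 = 1 then 1 else 0) + (if (x + z) % 2 = 1 then 1 else 0) +
        (if (y + z) % 2 = 1 then 1 else 0) =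
      2 * if ¬ (y % 2 = x % 2 ∧ z % 2 = x % 2) then 1 else 0 := by
  split_ifs <;> omega

def friendshipLeaf {n : ℕ} (j : Fin n) (e : Fin 2) : Fin (2 * n) := ⟨2 * j + e, by omega⟩

def friendshipTriangleEdge (n : ℕ) : Fin n × Fin 3 → Sym2 (Option (Fin (2 * n)))
  | (j, 0) => s(none, some (friendshipLeaf j 0))
  | (j, 1) => s(none, some (friendshipLeaf j 1))
  | (j, 2) => s(some (friendshipLeaf j 0), some (friendshipLeaf j 1))

section Friendship

variable {n : ℕ}

@[simp]
theorem friendshipGraph_adj_none_some (i : Fin (2 * n)) :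
    (friendshipGraph n).Adj none (some i) := by
  simp [friendshipGraph]

@[simp]
theorem friendshipGraph_adj_some_some {i j : Fin (2 * n)} :
    (friendshipGraph n).Adj (some i) (some j) ↔ i ≠ j ∧ i.val / 2 = j.val / 2 := by
  simp [friendshipGraph]
  omega

theorem friendshipLeaf_div_two_mod_two (i : Fin (2 * n)) :
    friendshipLeaf ⟨i / 2, by omega⟩ ⟨i % 2, by omega⟩ = i := by
  ext; simp [friendshipLeaf]; omega

theorem friendshipTriangleEdge_castSucc (j : Fin n) (e : Fin 2) :
    friendshipTriangleEdge n (j, e.castSucc) = s(none, some (friendshipLeaf j e)) := by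
  fin_cases e <;> rfl

theorem friendshipTriangleEdge_mem_edgeSet (p : Fin n × Fin 3) :
    friendshipTriangleEdge n p ∈ (friendshipGraph n).edgeSet := by
  obtain ⟨j, c⟩ := p
  fin_cases c <;> simp [friendshipTriangleEdge, friendshipLeaf, Fin.ext_iff]
  omega

theorem edgeSet_friendshipGraph :
    (friendshipGraph n).edgeSet = Set.range (friendshipTriangleEdge n) := by
  refine Set.Subset.antisymm (fun e he => ?_)
    (Set.range_subset_iff.2 friendshipTriangleEdge_mem_edgeSet)
  induction e using Sym2.ind with
  | _ a b =>
    rw [SimpleGraph.mem_edgeSet] at he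
    rcases a with _ | i <;> rcases b with _ | j
    · simp at he
    · exact ⟨(⟨j / 2, by omega⟩, Fin.castSucc ⟨j % 2, by omega⟩), by
        rw [friendshipTriangleEdge_castSucc, friendshipLeaf_div_two_mod_two]⟩
    · exact ⟨(⟨i / 2, by omega⟩, Fin.castSucc ⟨i % 2, by omega⟩), by
        rw [friendshipTriangleEdge_castSucc, friendshipLeaf_div_two_mod_two, Sym2.eq_swap]⟩
    · refine ⟨(⟨i / 2, by omega⟩, 2), ?_⟩
      simp only [friendshipGraph_adj_some_some, ne_eq, Fin.ext_iff] at he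
      simp only [friendshipTriangleEdge, Sym2.eq_iff, Option.some.injEq, Fin.ext_iff,
        friendshipLeaf]
      omega

theorem friendshipTriangleEdge_injective : Injective (friendshipTriangleEdge n) := by
  rintro ⟨j, c⟩ ⟨j', c'⟩ h
  fin_cases c <;> fin_cases c' <;>
    simp_all [friendshipTriangleEdge, friendshipLeaf, Fin.ext_iff] <;> omega

theorem ncard_edgeSet_friendshipGraph : (friendshipGraph n).edgeSet.ncard = 3 * n := by
  rw [edgeSet_friendshipGraph, Set.ncard_range_of_injective friendshipTriangleEdge_injective]
  simp [mul_comm]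

theorem eCount_one_friendshipGraph (f : Option (Fin (2 * n)) → ℕ) :
    eCount (friendshipGraph n) f 1 = 2 * #{j : Fin n |
      ¬ (perrin (f (some (friendshipLeaf j 0))) % 2 = perrin (f none) % 2 ∧
        perrin (f (some (friendshipLeaf j 1))) % 2 = perrin (f none) % 2)} := by
  rw [eCount_eq_card_filter _ friendshipTriangleEdge_injective edgeSet_friendshipGraph, card_filter,
    Fintype.sum_prod_type, card_filter, mul_sum]
  refine sum_congr rfl fun j _ => ?_
  simp only [Fin.sum_univ_three, friendshipTriangleEdge, perrinEdgeLabel_mk]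
  exact card_odd_pairwise_sums _ _ _

theorem not_isPerrinCordial_friendshipGraph (hn : n % 4 = 2) :
    ¬ IsPerrinCordial (friendshipGraph n) := by
  rintro ⟨f, -, hf⟩
  have htotal := eCount_zero_add_eCount_one (friendshipGraph n) (fun v => f v)
  have hodd := eCount_one_friendshipGraph (fun v => f v)
  rw [ncard_edgeSet_friendshipGraph] at htotal
  rw [abs_le] at hf
  omega

/-- The parities to realise: the apex is odd; in triangle `j` (leaves `2j`, `2j + 1`) both leaves
are odd for `j < g`, both even for `g ≤ j < g + u`, and only the leaf `2j + 1` is odd beyond. -/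
def oddPattern (g u : ℕ) : Option (Fin (2 * n)) → Bool
  | none => true
  | some t => decide (t.val / 2 < g ∨ (t.val % 2 = 1 ∧ g + u ≤ t.val / 2))

theorem sum_range_two_mul_oddPattern (g u m : ℕ) :
    ∑ t ∈ range (2 * m), (if t / 2 < g ∨ (t % 2 = 1 ∧ g + u ≤ t / 2) then 1 else 0) =
      2 * min g m + (m - (g + u)) := by
  induction m with
  | zero => simp
  | succ m ih =>
    rw [show 2 * (m + 1) = 2 * m + 1 + 1 by ring, sum_range_succ, sum_range_succ, ih]
    split_ifs <;> omega

theorem card_oddPattern (g u : ℕ) :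
    Fintype.card {v : Option (Fin (2 * n)) // oddPattern g u v} =
      2 * min g n + (n - (g + u)) + 1 := by
  rw [Fintype.card_subtype, card_filter, Fintype.sum_option]
  simp only [oddPattern, decide_eq_true_eq]
  rw [Fin.sum_univ_eq_sum_range
      (fun t => if t / 2 < g ∨ (t % 2 = 1 ∧ g + u ≤ t / 2) then 1 else 0),
    sum_range_two_mul_oddPattern]
  simp [add_comm]

theorem exists_injective_perrin_mod_two_iff_oddPattern {g u : ℕ}
    (h : 2 * min g n + (n - (g + u)) + 1 = oddPerrinCount (2 * n + 2)) :
    ∃ f : Option (Fin (2 * n)) → Fin (Fintype.card (Option (Fin (2 * n))) + 1),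
      Injective f ∧ ∀ v, perrin (f v) % 2 = 1 ↔ oddPattern g u v := by
  have hV : Fintype.card (Option (Fin (2 * n))) = 2 * n + 1 := by simp
  have hodd : Fintype.card {a : Fin (Fintype.card (Option (Fin (2 * n))) + 1) // perrin a % 2 = 1} =
      oddPerrinCount (2 * n + 2) := by
    rw [card_fin_perrin_odd, hV]
  refine exists_injective_iff_of_card_le (P := fun v => oddPattern g u v)
    (Q := fun a : Fin _ => perrin a % 2 = 1) ?_ ?_
  · rw [card_oddPattern, hodd, h]
  · rw [Fintype.card_subtype_compl, Fintype.card_subtype_compl, card_oddPattern, hodd, hV,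
      Fintype.card_fin]
    omega

theorem isPerrinCordial_friendshipGraph (hn : n % 4 ≠ 2) :
    IsPerrinCordial (friendshipGraph n) := by
  obtain ⟨k, hk⟩ : ∃ k, 4 * k ≤ 3 * n + 1 ∧ 3 * n ≤ 4 * k + 1 :=
    ⟨(3 * n + 2) / 4, by omega⟩
  obtain ⟨hc₁, hc₂⟩ := oddPerrinCount_bounds hk
  set g := n - k
  set u := 2 * g + k + 1 - oddPerrinCount (2 * n + 2)
  obtain ⟨f, hf, hpar⟩ :=
    exists_injective_perrin_mod_two_iff_oddPattern (n := n) (g := g) (u := u) (by omega)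
  refine ⟨f, hf, ?_⟩
  have hparity (v) : perrin (f v) % 2 = if oddPattern g u v then 1 else 0 := by
    have := hpar v
    split_ifs with hv <;> simp only [hv, iff_true, Bool.false_eq_true, iff_false] at this <;> omega
  have hmono (j : Fin n) : (perrin (f (some (friendshipLeaf j 0))) % 2 = perrin (f none) % 2 ∧
      perrin (f (some (friendshipLeaf j 1))) % 2 = perrin (f none) % 2) ↔ (j : ℕ) < g := by
    simp only [hparity, oddPattern, friendshipLeaf, decide_eq_true_eq, if_true, Fin.val_zero,
      Fin.val_one]
    generalize (j : ℕ) = m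
    split_ifs <;>
      simp only [and_self, and_true, and_false, true_iff, false_iff, not_lt] <;> omega
  have hodd : eCount (friendshipGraph n) (fun v => f v) 1 = 2 * k := by
    rw [eCount_one_friendshipGraph, filter_congr fun j _ => not_congr (hmono j)]
    have := card_filter_add_card_filter_not (s := univ) fun j : Fin n => (j : ℕ) < g
    rw [Fin.card_filter_val_lt, card_univ, Fintype.card_fin] at this
    omega
  have htotal := eCount_zero_add_eCount_one (friendshipGraph n) (fun v => f v)
  rw [ncard_edgeSet_friendshipGraph] at htotal
  rw [abs_le]
  omega

end Friendship

theorem friendshipGraph_isPerrinCordial_iff_general (n : ℕ) :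
    IsPerrinCordial (friendshipGraph n) ↔ ¬ n % 4 = 2 :=
  ⟨fun h hn => not_isPerrinCordial_friendshipGraph hn h, isPerrinCordial_friendshipGraph⟩

/-- for `n ≥ 1`, the friendship graph `F n` is Perrin cordial iff
`n ≢ 2 (mod 4)`. -/
theorem friendshipGraph_isPerrinCordial_iff (n : ℕ) (hn : 1 ≤ n) :
    IsPerrinCordial (friendshipGraph n) ↔ ¬ n % 4 = 2 :=
  friendshipGraph_isPerrinCordial_iff_general n
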